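/- Let m ≥ 4 be even. Then: (1) [m/2 + 1]_m = 11(10)^{m/2 − 1}; (2) [m/2 + 2]_m = 1111(10)^{m/2 − 2}; and (3) for every i ∈ {1, …, m} with i ≠ m/2 + 1 and i ≠ m/2 + 2, the string [i]_m belongs neither to the language 11(10)* nor to the language 1111(10)*. -/
import Mathlib


/-- The binary string `[i]_m ∈ {0,1}^m`, for `1 ≤ i ≤ m`.
If `m` is even: `[i]_m = (10)^i 0^{m−2i}` when `i ≤ m/2`, and
`[i]_m = (11)^{i−m/2} (10)^{m−i}` when `m/2 < i ≤ m`.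
If `m` is odd: `[i]_m = (10)^i 0^{m−2i}` when `i < m/2`,
`[i]_m = (11)^{i−⌊m/2⌋} (10)^{m−1−i} 0` when `m/2 < i < m`, and `[m]_m = 1^m`.
(`true` plays the role of the bit `1` and `false` that of `0`.) -/
def bcode (m i : ℕ) : List Bool :=
  if m % 2 = 0 then
    if i ≤ m / 2 then
      (List.replicate i [true, false]).flatten ++ List.replicate (m - 2 * i) false
    else
      (List.replicate (i - m / 2) [true, true]).flatten ++
        (List.replicate (m - i) [true, false]).flatten
  else
    if 2 * i < m then
      (List.replicate i [true, false]).flatten ++ List.replicate (m - 2 * i) false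
    else if i = m then
      List.replicate m true
    else
      (List.replicate (i - m / 2) [true, true]).flatten ++
        (List.replicate (m - 1 - i) [true, false]).flatten ++ [false]


lemma rep_flatten_succ (n : ℕ) (l : List Bool) :
    (List.replicate (n+1) l).flatten = l ++ (List.replicate n l).flatten := by
  simp [List.replicate_succ]

/-- Let `m ≥ 4` be even. Then (1) `[m/2+1]_m = 11(10)^{m/2−1}`;
(2) `[m/2+2]_m = 1111(10)^{m/2−2}`; and (3) for every `i ∈ {1, …, m}` with
`i ≠ m/2+1` and `i ≠ m/2+2`, the string `[i]_m` belongs neither to the language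
`11(10)*` nor to the language `1111(10)*`. -/
theorem bcode_crossing_patterns (m : ℕ) (hm : 4 ≤ m) (hev : m % 2 = 0) :
    bcode m (m / 2 + 1) =
      [true, true] ++ (List.replicate (m / 2 - 1) [true, false]).flatten ∧
    bcode m (m / 2 + 2) =
      [true, true, true, true] ++ (List.replicate (m / 2 - 2) [true, false]).flatten ∧
    (∀ i : ℕ, 1 ≤ i → i ≤ m → i ≠ m / 2 + 1 → i ≠ m / 2 + 2 →
      (∀ t : ℕ, bcode m i ≠ [true, true] ++ (List.replicate t [true, false]).flatten) ∧
      (∀ t : ℕ, bcode m i ≠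
        [true, true, true, true] ++ (List.replicate t [true, false]).flatten)) := by
  obtain ⟨h, rfl⟩ : ∃ h, m = 2 * h := ⟨m / 2, by omega⟩
  have hh : 2 * h / 2 = h := by omega
  have hh2 : 2 ≤ h := by omega
  simp only [hh]
  refine ⟨?_, ?_, ?_⟩
  · simp only [bcode, Nat.mul_mod_right, if_true, hh]
    rw [if_neg (by omega)]
    have e1 : h + 1 - h = 1 := by omega
    have e2 : 2 * h - (h + 1) = h - 1 := by omega
    rw [e1, e2]
    simp
  · simp only [bcode, Nat.mul_mod_right, if_true, hh]
    rw [if_neg (by omega)]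
    have e1 : h + 2 - h = 2 := by omega
    have e2 : 2 * h - (h + 2) = h - 2 := by omega
    rw [e1, e2]
    simp [rep_flatten_succ]
  · intro i h1 h2 hne1 hne2
    simp only [bcode, Nat.mul_mod_right, if_true, hh]
    by_cases hi : i ≤ h
    · rw [if_pos hi]
      obtain ⟨j, rfl⟩ : ∃ j, i = j + 1 := ⟨i - 1, by omega⟩
      constructor <;> intro t heq <;> simp [rep_flatten_succ] at heq
    · rw [if_neg hi]
      obtain ⟨k, hk⟩ : ∃ k, i - h = k + 3 := ⟨i - h - 3, by omega⟩
      rw [hk]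
      constructor <;> intro t heq <;>
        cases t with
        | zero => simp [rep_flatten_succ] at heq
        | succ s => simp [rep_flatten_succ] at heq
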